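/- The number of facts is an inherent statistical feature: fix a finite set of rules R, a finite pool Ω of predicates with |Ω| = n, and a query predicate q. For r < n, among the r-element subsets F ⊆ Ω, let p(r) be the fraction for which q is provable from facts F and rules R. Then p is nondecreasing: p(r) ≤ p(r+1) for every r < n; equivalently, |{F ⊆ Ω : |F| = r, q provable from (F, R)}| · C(n, r+1) ≤ |{F ⊆ Ω : |F| = r+1, q provable from (F, R)}| · C(n, r). -/

import Mathlib

/-!
Provability only grows with the set of facts, so the family of fact sets from which `q` is
provable is an up-set. If `a_r` counts the `r`-element members of an up-set of subsets of an
`n`-set, double counting the pairs `F ⊂ G` with `|F| = r`, `|G| = r + 1` gives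
`a_r (n - r) ≤ a_{r+1} (r + 1)`, and `C(n, r + 1) (r + 1) = C(n, r) (n - r)` turns this into
`a_r C(n, r + 1) ≤ a_{r+1} C(n, r)`.
-/

/-- Provability of a predicate from facts `F` and definite-clause rules `R`. -/
inductive Provable {V : Type*} (F : Set V) (R : Set (Finset V × V)) : V → Prop
  | fact (q : V) : q ∈ F → Provable F R q
  | rule (B : Finset V) (h : V) : (B, h) ∈ R → (∀ b ∈ B, Provable F R b) → Provable F R h

open Finset

theorem Provable.mono {V : Type*} {F F' : Set V} {R : Set (Finset V × V)} {q : V}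
    (hF : F ⊆ F') (h : Provable F R q) : Provable F' R q := by
  induction h with
  | fact q hq => exact .fact q (hF hq)
  | rule B h hR _ ih => exact .rule B h hR ih

theorem Provable.monotone_finset {V : Type*} (R : Set (Finset V × V)) (q : V) :
    Monotone fun F : Finset V => Provable (↑F : Set V) R q :=
  fun _ _ hFG => Provable.mono (coe_subset.2 hFG)

namespace Finset

variable {α : Type*} [DecidableEq α] {Ω : Finset α} {P : Finset α → Prop} [DecidablePred P]
  {r : ℕ}

theorem card_sdiff_le_card_bipartiteAbove_powersetCard_succ (hP : Monotone P) {s : Finset α}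
    (hs : s ∈ (Ω.powersetCard r).filter P) :
    #(Ω \ s) ≤ #(((Ω.powersetCard (r + 1)).filter P).bipartiteAbove (· ⊆ ·) s) := by
  obtain ⟨hsΩ, hscard⟩ := mem_powersetCard.1 (mem_filter.1 hs).1
  rw [← card_image_of_injOn ((insert_inj_on s).mono fun x hx => (mem_sdiff.1 hx).2)]
  refine card_le_card fun t ht => ?_
  obtain ⟨x, hx, rfl⟩ := mem_image.1 ht
  obtain ⟨hxΩ, hxs⟩ := mem_sdiff.1 hx
  refine (mem_bipartiteAbove _).2 ⟨mem_filter.2 ⟨mem_powersetCard.2 ⟨insert_subset hxΩ hsΩ, ?_⟩,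
    hP (subset_insert x s) (mem_filter.1 hs).2⟩, subset_insert x s⟩
  rw [card_insert_of_notMem hxs, hscard]

theorem card_bipartiteBelow_powersetCard_le {t : Finset α} (ht : #t = r + 1) :
    #(((Ω.powersetCard r).filter P).bipartiteBelow (· ⊆ ·) t) ≤ r + 1 :=
  calc _ ≤ #(t.powersetCard r) := card_le_card fun s hs => by
        obtain ⟨hs, hst⟩ := (mem_bipartiteBelow _).1 hs
        exact mem_powersetCard.2 ⟨hst, (mem_powersetCard.1 (mem_filter.1 hs).1).2⟩
    _ = r + 1 := by rw [card_powersetCard, ht, Nat.choose_succ_self_right]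

theorem card_filter_powersetCard_mul_le_of_monotone (hP : Monotone P) :
    #((Ω.powersetCard r).filter P) * (#Ω - r) ≤
      #((Ω.powersetCard (r + 1)).filter P) * (r + 1) := by
  refine card_mul_le_card_mul (· ⊆ ·) (fun s hs => ?_) (fun t ht => ?_)
  · obtain ⟨hsΩ, hscard⟩ := mem_powersetCard.1 (mem_filter.1 hs).1
    simpa only [card_sdiff_of_subset hsΩ, hscard] using
      card_sdiff_le_card_bipartiteAbove_powersetCard_succ hP hs
  · exact card_bipartiteBelow_powersetCard_le (mem_powersetCard.1 (mem_filter.1 ht).1).2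

end Finset

/- The ascription `(↑F : Set V)` in the statement makes its filters range over `Finset (Set V)`:
the families `Ω.powersetCard r` are pushed through the coercion with the `Finset` monad. -/
open scoped Classical in
theorem Finset.card_filter_bind_pure_coe {α : Type*} (𝒜 : Finset (Finset α))
    (p : Set α → Prop) :
    #((𝒜 >>= fun s => pure (↑s : Set α)).filter p) = #(𝒜.filter fun s : Finset α => p s) := by
  rw [bind_pure_comp, fmap_def, filter_image]
  convert card_image_of_injective _ SetLike.coe_injective

theorem Nat.mul_choose_succ_le_of_mul_sub_le {a b n r : ℕ} (h : a * (n - r) ≤ b * (r + 1)) :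
    a * n.choose (r + 1) ≤ b * n.choose r := by
  refine Nat.le_of_mul_le_mul_right ?_ r.succ_pos
  calc a * n.choose (r + 1) * (r + 1)
      = a * (n - r) * n.choose r := by rw [mul_assoc, Nat.choose_succ_right_eq]; ring
    _ ≤ b * (r + 1) * n.choose r := Nat.mul_le_mul_right _ h
    _ = b * n.choose r * (r + 1) := by ring

open scoped Classical in
theorem num_facts_statistical_feature_general {V : Type*}
    (R : Finset (Finset V × V)) (Ω : Finset V) (q : V)
    {n : ℕ} (hn : n = Ω.card) :
    ∀ r < n,
      ((Ω.powersetCard r).filter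
          (fun F => Provable (↑F : Set V) (↑R : Set (Finset V × V)) q)).card *
          Nat.choose n (r + 1) ≤
        ((Ω.powersetCard (r + 1)).filter
            (fun F => Provable (↑F : Set V) (↑R : Set (Finset V × V)) q)).card *
          Nat.choose n r := by
  intro r _
  subst hn
  rw [card_filter_bind_pure_coe, card_filter_bind_pure_coe]
  exact Nat.mul_choose_succ_le_of_mul_sub_le
    (card_filter_powersetCard_mul_le_of_monotone (Provable.monotone_finset _ q))

open scoped Classical in
theorem num_facts_statistical_feature {V : Type*} [DecidableEq V]
    (R : Finset (Finset V × V)) (Ω : Finset V) (q : V)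
    {n : ℕ} (hn : n = Ω.card) :
    ∀ r < n,
      ((Ω.powersetCard r).filter
          (fun F => Provable (↑F : Set V) (↑R : Set (Finset V × V)) q)).card *
          Nat.choose n (r + 1) ≤
        ((Ω.powersetCard (r + 1)).filter
            (fun F => Provable (↑F : Set V) (↑R : Set (Finset V × V)) q)).card *
          Nat.choose n r :=
  num_facts_statistical_feature_general R Ω q hn
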